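/- arXiv:1907.13602 — 4 statements merged into one kernel-verified Lean document; each statement's English description precedes it below -/
import Mathlib

section
/- If a set {s₁,…,s_r} ⊆ {±1}ⁿ of sign vectors is Schur independent, then it is linearly independent. -/
/-! If `∑ j, g j • s j = 0`, square this vector componentwise. Since `s j * s j = 1`, the
square is `(∑ j, g j ^ 2) • 1 + ∑ i < j, (2 * g i * g j) • (s i * s j)`, a vanishing
combination of the Schur family; Schur independence forces `∑ j, g j ^ 2 = 0`, so `g = 0`. -/

/-- A family of sign vectors is Schur independent when the all-ones vector together
with the pairwise Schur (componentwise) products `s i ⊙ s j` for `i < j` is linearly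
independent. -/
def SchurIndep {n r : ℕ} (s : Fin r → (Fin n → ℝ)) : Prop :=
  LinearIndependent ℝ (fun p : Option {p : Fin r × Fin r // p.1 < p.2} =>
    p.elim (fun _ => (1 : ℝ)) (fun q => s q.1.1 * s q.1.2))

theorem Fintype.sum_subtype_lt_eq_sum_ite {ι M : Type*} [Fintype ι] [LinearOrder ι]
    [AddCommMonoid M] (f : ι → ι → M) :
    ∑ p : {p : ι × ι // p.1 < p.2}, f p.1.1 p.1.2 =
      ∑ p : ι × ι, if p.1 < p.2 then f p.1 p.2 else 0 := by
  rw [← Finset.sum_filter, ← Finset.sum_subtype_eq_sum_filter, Finset.subtype_univ]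

theorem sq_sum_eq_sum_sq_add_two_mul_sum_lt {ι R : Type*} [Fintype ι] [LinearOrder ι]
    [CommSemiring R] (x : ι → R) :
    (∑ i, x i) ^ 2 =
      ∑ i, x i ^ 2 + 2 * ∑ p : {p : ι × ι // p.1 < p.2}, x p.1.1 * x p.1.2 := by
  have trichotomy (p : ι × ι) : x p.1 * x p.2 = (if p.1 < p.2 then x p.1 * x p.2 else 0) +
      (if p.1 = p.2 then x p.1 * x p.2 else 0) + (if p.2 < p.1 then x p.1 * x p.2 else 0) := by
    rcases lt_trichotomy p.1 p.2 with h | h | h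
    · simp [h, h.ne, h.not_gt]
    · simp [h]
    · simp [h, h.ne', h.not_gt]
  have diagonal : ∑ p : ι × ι, (if p.1 = p.2 then x p.1 * x p.2 else 0) = ∑ i, x i ^ 2 := by
    simp [Fintype.sum_prod_type, sq]
  have swap : ∑ p : ι × ι, (if p.2 < p.1 then x p.1 * x p.2 else 0) =
      ∑ p : ι × ι, (if p.1 < p.2 then x p.1 * x p.2 else 0) :=
    Fintype.sum_equiv (Equiv.prodComm ι ι) _ _ fun p => by simp [mul_comm]
  rw [sq, Fintype.sum_mul_sum, ← Fintype.sum_prod_type' (fun i j => x i * x j),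
    Fintype.sum_congr _ _ trichotomy, Finset.sum_add_distrib, Finset.sum_add_distrib, diagonal,
    swap, Fintype.sum_subtype_lt_eq_sum_ite (fun i j => x i * x j)]
  ring

theorem sq_sum_smul_eq_of_mul_self_eq_one {ι R A : Type*} [Fintype ι] [LinearOrder ι]
    [CommSemiring R] [CommSemiring A] [Algebra R A] (g : ι → R) (s : ι → A)
    (hs : ∀ j, s j * s j = 1) :
    (∑ j, g j • s j) ^ 2 = (∑ j, g j ^ 2) • 1 +
      ∑ q : {p : ι × ι // p.1 < p.2}, (2 * (g q.1.1 * g q.1.2)) • (s q.1.1 * s q.1.2) := by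
  rw [sq_sum_eq_sum_sq_add_two_mul_sum_lt, Finset.sum_smul, Finset.mul_sum]
  simp only [sq, smul_mul_smul_comm, hs, mul_smul, two_mul, add_smul, Finset.sum_add_distrib]

/-- A Schur independent family of sign vectors is linearly independent. -/
theorem schurIndep_linearIndependent {n r : ℕ} (s : Fin r → Fin n → ℝ)
    (hs : ∀ i k, s i k = 1 ∨ s i k = -1) (h : SchurIndep s) :
    LinearIndependent ℝ s := by
  have hsq (i : Fin r) : s i * s i = 1 := funext fun k => by rcases hs i k with h | h <;> simp [h]
  rw [SchurIndep, Fintype.linearIndependent_iff] at h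
  rw [Fintype.linearIndependent_iff]
  intro g hg i
  have hsum_sq : ∑ j, g j ^ 2 = 0 := by
    refine h (Option.elim · (∑ j, g j ^ 2) fun q => 2 * (g q.1.1 * g q.1.2)) ?_ none
    rw [Fintype.sum_option]
    exact (sq_sum_smul_eq_of_mul_self_eq_one g s hsq).symm.trans (by rw [hg, sq, zero_mul])
  exact pow_eq_zero_iff two_ne_zero |>.1 <|
    congrFun ((Fintype.sum_eq_zero_iff_of_nonneg fun j => sq_nonneg (g j)).1 hsum_sq) i
end

section
/- A binary matrix Z ∈ {0,1}^{n×r} is Schur independent if and only if the sign matrix [F(Z), e] ∈ {±1}^{n×(r+1)} is Schur independent, where F(Z) = 2Z − E entrywise and e is the all-ones column. -/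
/-- Schur independence of a family of binary vectors: the all-ones vector, the vectors
themselves, and their pairwise Schur products for `i < j` are linearly independent. -/
def BinSchurIndep {n r : ℕ} (z : Fin r → (Fin n → ℝ)) : Prop :=
  LinearIndependent ℝ (fun p : Option (Fin r ⊕ {p : Fin r × Fin r // p.1 < p.2}) =>
    p.elim (fun _ => (1 : ℝ)) (Sum.elim z (fun q => z q.1.1 * z q.1.2)))

/-!
With `s = [2z - e, e]`, the two families of vectors in the definitions span the same space:
`s_i s_{r+1} = 2 z_i - e` and `s_i s_j = 4 z_i z_j - 2 z_i - 2 z_j + e` express the sign family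
through the binary one, and these identities can be inverted since `2` is invertible.
Both families have `1 + r + r(r-1)/2` members, so one is linearly independent iff the other is.
-/

theorem linearIndependent_iff_of_span_eq_of_card_eq {K M ι κ : Type*} [DivisionRing K]
    [AddCommGroup M] [Module K M] [Fintype ι] [Fintype κ] {v : ι → M} {w : κ → M}
    (hspan : Submodule.span K (Set.range v) = Submodule.span K (Set.range w))
    (hcard : Fintype.card ι = Fintype.card κ) :
    LinearIndependent K v ↔ LinearIndependent K w := by
  rw [linearIndependent_iff_card_eq_finrank_span, linearIndependent_iff_card_eq_finrank_span,
    Set.finrank, Set.finrank, hspan, hcard]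

abbrev LtPair (r : ℕ) := {p : Fin r × Fin r // p.1 < p.2}

theorem LtPair.card (r : ℕ) : Fintype.card (LtPair r) = r.choose 2 := by
  rw [Fintype.card_subtype, Fintype.card_product_filter_lt, Fintype.card_fin]

theorem card_option_sum_ltPair (r : ℕ) :
    Fintype.card (Option (Fin r ⊕ LtPair r)) = Fintype.card (Option (LtPair (r + 1))) := by
  simp only [Fintype.card_option, Fintype.card_sum, Fintype.card_fin, LtPair.card,
    Nat.choose_succ_succ', Nat.choose_one_right]

section SchurFamily

variable {A : Type*} [CommRing A] {r : ℕ}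

def schurFamily (s : Fin r → A) : Option (LtPair r) → A :=
  fun p => p.elim 1 (fun q => s q.1.1 * s q.1.2)

def binSchurFamily (z : Fin r → A) : Option (Fin r ⊕ LtPair r) → A :=
  fun p => p.elim 1 (Sum.elim z (fun q => z q.1.1 * z q.1.2))

variable {K : Type*} [Field K] [Module K A]

theorem one_mem_span_schurFamily (s : Fin r → A) :
    1 ∈ Submodule.span K (Set.range (schurFamily s)) :=
  Submodule.subset_span ⟨none, rfl⟩

theorem mul_mem_span_schurFamily (s : Fin r → A) {i j : Fin r} (hij : i < j) :
    s i * s j ∈ Submodule.span K (Set.range (schurFamily s)) :=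
  Submodule.subset_span ⟨some ⟨(i, j), hij⟩, rfl⟩

theorem one_mem_span_binSchurFamily (z : Fin r → A) :
    1 ∈ Submodule.span K (Set.range (binSchurFamily z)) :=
  Submodule.subset_span ⟨none, rfl⟩

theorem mem_span_binSchurFamily (z : Fin r → A) (i : Fin r) :
    z i ∈ Submodule.span K (Set.range (binSchurFamily z)) :=
  Submodule.subset_span ⟨some (.inl i), rfl⟩

theorem mul_mem_span_binSchurFamily (z : Fin r → A) {i j : Fin r} (hij : i < j) :
    z i * z j ∈ Submodule.span K (Set.range (binSchurFamily z)) :=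
  Submodule.subset_span ⟨some (.inr ⟨(i, j), hij⟩), rfl⟩

theorem Submodule.mem_of_two_mul_mem [NeZero (2 : K)] {W : Submodule K A} {x : A}
    (h : 2 * x ∈ W) : x ∈ W :=
  (W.smul_mem_iff (two_ne_zero (α := K))).1 (by rwa [two_smul, ← two_mul])

theorem span_schurFamily_snoc_le (z : Fin r → A) :
    Submodule.span K (Set.range (schurFamily (Fin.snoc (fun i => 2 * z i - 1) 1))) ≤
      Submodule.span K (Set.range (binSchurFamily z)) := by
  set W := Submodule.span K (Set.range (binSchurFamily z))
  have htwo {x : A} (hx : x ∈ W) : 2 * x ∈ W := by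
    rw [two_mul]
    exact add_mem hx hx
  have hsign (i : Fin r) : 2 * z i - 1 ∈ W :=
    sub_mem (htwo (mem_span_binSchurFamily z i)) (one_mem_span_binSchurFamily z)
  refine Submodule.span_le.2 (Set.range_subset_iff.2 fun p => ?_)
  rcases p with _ | ⟨⟨a, b⟩, hab⟩
  · exact one_mem_span_binSchurFamily z
  induction a using Fin.lastCases with
  | last => exact absurd hab (Fin.le_last b).not_gt
  | cast i =>
    induction b using Fin.lastCases with
    | last => simpa [schurFamily] using hsign i
    | cast j =>
      have hij : i < j := Fin.castSucc_lt_castSucc_iff.1 hab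
      simp only [schurFamily, Option.elim, Fin.snoc_castSucc, SetLike.mem_coe]
      convert sub_mem (sub_mem (sub_mem (htwo (htwo (mul_mem_span_binSchurFamily z hij)))
        (hsign i)) (hsign j)) (one_mem_span_binSchurFamily z) using 1
      ring

theorem span_binSchurFamily_le [NeZero (2 : K)] (z : Fin r → A) :
    Submodule.span K (Set.range (binSchurFamily z)) ≤
      Submodule.span K (Set.range (schurFamily (Fin.snoc (fun i => 2 * z i - 1) 1))) := by
  set s : Fin (r + 1) → A := Fin.snoc (fun i => 2 * z i - 1) 1
  set V := Submodule.span K (Set.range (schurFamily s))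
  have hsign (i : Fin r) : 2 * z i - 1 ∈ V := by
    simpa [s] using mul_mem_span_schurFamily (K := K) s (Fin.castSucc_lt_last i)
  have hmem (i : Fin r) : z i ∈ V :=
    Submodule.mem_of_two_mul_mem (by simpa using add_mem (hsign i) (one_mem_span_schurFamily s))
  refine Submodule.span_le.2 (Set.range_subset_iff.2 fun p => ?_)
  rcases p with _ | i | ⟨⟨i, j⟩, hij⟩
  · exact one_mem_span_schurFamily s
  · exact hmem i
  · show z i * z j ∈ V
    have hprod := mul_mem_span_schurFamily (K := K) s (Fin.castSucc_lt_castSucc_iff.2 hij)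
    simp only [s, Fin.snoc_castSucc] at hprod
    refine Submodule.mem_of_two_mul_mem (Submodule.mem_of_two_mul_mem ?_)
    convert add_mem (add_mem (add_mem hprod (hsign i)) (hsign j)) (one_mem_span_schurFamily s)
      using 1
    ring

theorem span_binSchurFamily_eq [NeZero (2 : K)] (z : Fin r → A) :
    Submodule.span K (Set.range (binSchurFamily z)) =
      Submodule.span K (Set.range (schurFamily (Fin.snoc (fun i => 2 * z i - 1) 1))) :=
  le_antisymm (span_binSchurFamily_le z) (span_schurFamily_snoc_le z)

end SchurFamily

theorem binSchurIndep_iff_schurIndep_snoc_general {n r : ℕ} (z : Fin r → Fin n → ℝ) :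
    BinSchurIndep z ↔
      SchurIndep (Fin.snoc (fun i k => 2 * z i k - 1) (fun _ => (1 : ℝ))) :=
  linearIndependent_iff_of_span_eq_of_card_eq (span_binSchurFamily_eq z) (card_option_sum_ltPair r)

/-- A binary matrix `Z` is Schur independent iff the sign matrix
`[F(Z), e]` (with `F(z) = 2z - e`) is Schur independent. -/
theorem binSchurIndep_iff_schurIndep_snoc {n r : ℕ} (z : Fin r → Fin n → ℝ)
    (hz : ∀ i k, z i k = 0 ∨ z i k = 1) :
    BinSchurIndep z ↔
      SchurIndep (Fin.snoc (fun i k => 2 * z i k - 1) (fun _ => (1 : ℝ))) :=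
  binSchurIndep_iff_schurIndep_snoc_general z
end

section
/- Let Z ∈ {0,1}^{n×r} be a Schur independent binary matrix and Q ∈ R^{r×r} an invertible matrix. Then ZQ is a binary matrix (all entries in {0,1}) if and only if Q is a permutation matrix. -/
open Matrix

/-- A permutation matrix. -/
def IsPermMatrix {r : ℕ} (Q : Matrix (Fin r) (Fin r) ℝ) : Prop :=
  ∃ π : Equiv.Perm (Fin r), ∀ i j, Q i j = if j = π i then 1 else 0

/-!
The componentwise product is the multiplication of the ring `Fin n → ℝ`, so binary vectors are
exactly its idempotents. If `w = ∑ k, q k • z k` is a column of `Z * Q` (with `q` a column of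
`Q`) and every `z k` is idempotent, then
`w * w - w = ∑ k, (q k ^ 2 - q k) • z k + ∑ k < l, 2 q k q l • (z k * z l)`.
When `w` is binary this vanishes, and Schur independence forces `q k ∈ {0, 1}` and
`q k * q l = 0` for `k ≠ l`: every column of `Q` has at most one nonzero entry, equal to `1`.
Invertibility makes the columns nonzero and pairwise distinct, so `Q` is a permutation matrix.
Conversely, multiplying by a permutation matrix only permutes the columns of `Z`.
-/

theorem Pi.isIdempotentElem_iff {ι : Type*} {M : ι → Type*} [∀ i, Mul (M i)] {f : ∀ i, M i} :
    IsIdempotentElem f ↔ ∀ i, IsIdempotentElem (f i) :=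
  funext_iff

theorem Fintype.sum_mul_self_eq_add_two_mul_sum_lt {ι R : Type*} [Fintype ι] [LinearOrder ι]
    [CommSemiring R] (f : ι → R) :
    (∑ i, f i) * ∑ i, f i
      = ∑ i, f i * f i + 2 * ∑ p : {p : ι × ι // p.1 < p.2}, f p.1.1 * f p.1.2 := by
  have hlt : ∑ p : {p : ι × ι // p.1 < p.2}, f p.1.1 * f p.1.2
      = ∑ i, ∑ j, if i < j then f i * f j else 0 := by
    rw [← Finset.sum_subtype {p : ι × ι | p.1 < p.2} (by simp) fun p => f p.1 * f p.2,
      Finset.sum_filter, Fintype.sum_prod_type]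
  have hgt : ∑ i, ∑ j, (if j < i then f i * f j else 0)
      = ∑ i, ∑ j, if i < j then f i * f j else 0 := by
    rw [Finset.sum_comm]
    exact Finset.sum_congr rfl fun i _ => Finset.sum_congr rfl fun j _ => by rw [mul_comm]
  calc (∑ i, f i) * ∑ i, f i = ∑ i, ∑ j, f i * f j := Finset.sum_mul_sum _ _ _ _
    _ = ∑ i, ∑ j, ((if i < j then f i * f j else 0) + (if i = j then f i * f j else 0)
          + (if j < i then f i * f j else 0)) := by
      refine Finset.sum_congr rfl fun i _ => Finset.sum_congr rfl fun j _ => ?_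
      rcases lt_trichotomy i j with h | rfl | h
      · simp [h, h.ne, h.not_gt]
      · simp
      · simp [h, h.ne', h.not_gt]
    _ = _ := by
      simp only [Finset.sum_add_distrib, Finset.sum_ite_eq, Finset.mem_univ, if_true, hgt, hlt]
      ring

theorem sum_smul_mul_self_sub_sum_smul_of_isIdempotentElem {ι R A : Type*} [Fintype ι]
    [LinearOrder ι] [CommRing R] [CommRing A] [Algebra R A] (c : ι → R) {z : ι → A}
    (hz : ∀ i, IsIdempotentElem (z i)) :
    (∑ i, c i • z i) * (∑ i, c i • z i) - ∑ i, c i • z i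
      = ∑ i, (c i * c i - c i) • z i
        + ∑ p : {p : ι × ι // p.1 < p.2}, (2 * (c p.1.1 * c p.1.2)) • (z p.1.1 * z p.1.2) := by
  rw [Fintype.sum_mul_self_eq_add_two_mul_sum_lt, Finset.mul_sum]
  simp only [smul_mul_smul_comm, (hz _).eq, sub_smul, Finset.sum_sub_distrib, two_mul, add_smul,
    Finset.sum_add_distrib]
  abel

theorem Matrix.col_mul_eq_sum_smul {m n o R : Type*} [Fintype n] [CommSemiring R]
    (A : Matrix m n R) (B : Matrix n o R) (j : o) :
    (A * B).col j = ∑ k, B k j • A.col k := by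
  ext i
  simp [mul_apply, Finset.sum_apply, mul_comm]

theorem BinSchurIndep.isIdempotentElem_coeff {n r : ℕ} {z : Fin r → Fin n → ℝ}
    (hS : BinSchurIndep z) (hz : ∀ k, IsIdempotentElem (z k)) {c : Fin r → ℝ}
    (hc : IsIdempotentElem (∑ k, c k • z k)) :
    (∀ k, IsIdempotentElem (c k)) ∧ ∀ k l, k ≠ l → c k * c l = 0 := by
  have hcoeff := Fintype.linearIndependent_iff.mp (hS.comp some (Option.some_injective _))
    (Sum.elim (fun k => c k * c k - c k) fun p => 2 * (c p.1.1 * c p.1.2)) (by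
      rw [Fintype.sum_sum_type]
      simpa [← sum_smul_mul_self_sub_sum_smul_of_isIdempotentElem c hz] using
        sub_eq_zero.mpr hc.eq)
  have hlt : ∀ k l, k < l → c k * c l = 0 := fun k l hkl => by
    simpa using hcoeff (.inr ⟨(k, l), hkl⟩)
  refine ⟨fun k => sub_eq_zero.mp (hcoeff (.inl k)), fun k l hkl => ?_⟩
  rcases hkl.lt_or_gt with h | h
  · exact hlt k l h
  · rw [mul_comm]
    exact hlt l k h

theorem Matrix.exists_permMatrix_eq_of_isUnit {K n : Type*} [Field K] [Fintype n]
    [DecidableEq n] {Q : Matrix n n K} (hQ : IsUnit Q) (h01 : ∀ k j, Q k j = 0 ∨ Q k j = 1)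
    (hcol : ∀ j k l, k ≠ l → Q k j * Q l j = 0) :
    ∃ π : Equiv.Perm n, π.permMatrix K = Q := by
  have hli := linearIndependent_cols_iff_isUnit.mpr hQ
  have hsingle : ∀ j, ∃ k, Q.col j = Pi.single k 1 := by
    intro j
    obtain ⟨k, hk⟩ : ∃ k, Q k j ≠ 0 := by
      by_contra! h
      exact hli.ne_zero j (funext h)
    refine ⟨k, funext fun l => ?_⟩
    rcases eq_or_ne l k with rfl | hlk
    · simpa using (h01 l j).resolve_left hk
    · simpa [hlk] using (mul_eq_zero.mp (hcol j l k hlk)).resolve_right hk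
  choose σ hσ using hsingle
  have hσ_inj : Function.Injective σ := fun j j' h => hli.injective (by rw [hσ, hσ, h])
  refine ⟨(Equiv.ofBijective σ (Finite.injective_iff_bijective.mp hσ_inj))⁻¹, ?_⟩
  refine transpose_injective (funext fun j => ?_)
  rw [transpose_permMatrix, inv_inv]
  exact (PEquiv.toMatrix_toPEquiv_apply _ j).trans (hσ j).symm

theorem isPermMatrix_iff_exists_permMatrix_eq {r : ℕ} {Q : Matrix (Fin r) (Fin r) ℝ} :
    IsPermMatrix Q ↔ ∃ π : Equiv.Perm (Fin r), π.permMatrix ℝ = Q := by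
  refine exists_congr fun π => ⟨fun h => ?_, fun h i j => ?_⟩
  · ext i j
    simp [h, PEquiv.toMatrix_apply, eq_comm]
  · simp [← h, PEquiv.toMatrix_apply, eq_comm]

/-- For a Schur independent binary matrix `Z` and invertible `Q`,
`ZQ` is a binary matrix iff `Q` is a permutation matrix. -/
theorem binaryMatrix_mul_iff_perm {n r : ℕ} (Z : Matrix (Fin n) (Fin r) ℝ)
    (hZ : ∀ i j, Z i j = 0 ∨ Z i j = 1)
    (hSchur : BinSchurIndep (fun j i => Z i j))
    (Q : Matrix (Fin r) (Fin r) ℝ) (hQ : IsUnit Q) :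
    (∀ i j, (Z * Q) i j = 0 ∨ (Z * Q) i j = 1) ↔ IsPermMatrix Q := by
  have hcol_idem : ∀ {m : ℕ} (M : Matrix (Fin n) (Fin m) ℝ), (∀ i j, M i j = 0 ∨ M i j = 1) →
      ∀ j, IsIdempotentElem (M.col j) := fun M hM j =>
    Pi.isIdempotentElem_iff.mpr fun i => IsIdempotentElem.iff_eq_zero_or_one.mpr (hM i j)
  rw [isPermMatrix_iff_exists_permMatrix_eq]
  constructor
  · intro hZQ
    have hcoeff (j : Fin r) := hSchur.isIdempotentElem_coeff (hcol_idem Z hZ)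
      (col_mul_eq_sum_smul Z Q j ▸ hcol_idem _ hZQ j)
    exact exists_permMatrix_eq_of_isUnit hQ
      (fun k j => IsIdempotentElem.iff_eq_zero_or_one.mp ((hcoeff j).1 k)) fun j => (hcoeff j).2
  · rintro ⟨π, rfl⟩ i j
    rw [PEquiv.mul_toMatrix_toPEquiv]
    exact hZ i (π.symm j)
end

section
/- Any sign matrix S ∈ {±1}^{n×r} with permeance ν(S) = λ_min(SᵀS)/n > 0 satisfies μ_(l)(S) ≤ ν(S)⁻¹, where μ_(l)(S) = (n/r) max_{1≤k≤n} ‖P e_k‖² and P is the orthogonal projector onto range(S). -/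
/-!
Put `w = P e_k`. Since `P` is symmetric and fixes the columns of `S`, `Sᵀ w = Sᵀ e_k` is the
`k`-th row of `S`, whose squared norm is `r`. Writing `w = S c`, Cauchy–Schwarz gives
`‖w‖² = ⟨c, Sᵀ w⟩ ≤ ‖c‖ √r`, while the permeance bound gives `n ν ‖c‖² ≤ ‖S c‖² = ‖w‖²`.
Together, `n ν ‖w‖⁴ ≤ r ‖w‖²`, i.e. `n ν ‖w‖² ≤ r`.
-/

open Matrix

theorem sum_sq_eq_card_of_eq_one_or_eq_neg_one {ι : Type*} [Fintype ι] (x : ι → ℝ)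
    (hx : ∀ j, x j = 1 ∨ x j = -1) : ∑ j, x j ^ 2 = Fintype.card ι := by
  have hsq : ∀ j, x j ^ 2 = 1 := fun j => by rcases hx j with h | h <;> simp [h]
  simp [hsq]

namespace Matrix

variable {m ι : Type*} [Fintype m] [Fintype ι]

theorem mul_eq_right_of_forall_mulVec_mulVec_eq [DecidableEq ι] {P : Matrix m m ℝ}
    {S : Matrix m ι ℝ} (h : ∀ c, P *ᵥ (S *ᵥ c) = S *ᵥ c) : P * S = S :=
  ext_of_mulVec_single fun j => by rw [← mulVec_mulVec, h]

theorem sum_sq_mulVec_eq_sum_mul_transpose_mulVec_mulVec (S : Matrix m ι ℝ) (c : ι → ℝ) :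
    ∑ i, (S *ᵥ c) i ^ 2 = ∑ j, c j * (Sᵀ *ᵥ (S *ᵥ c)) j := by
  have h : (S *ᵥ c) ⬝ᵥ (S *ᵥ c) = c ⬝ᵥ (Sᵀ *ᵥ (S *ᵥ c)) := by
    rw [dotProduct_mulVec, mulVec_transpose, dotProduct_comm]
  simpa only [dotProduct, sq] using h

theorem mul_sum_sq_mulVec_le_sum_sq_transpose_mulVec_mulVec (S : Matrix m ι ℝ) {a : ℝ}
    (ha : 0 ≤ a) (c : ι → ℝ) (hc : a * ∑ j, c j ^ 2 ≤ ∑ i, (S *ᵥ c) i ^ 2) :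
    a * ∑ i, (S *ᵥ c) i ^ 2 ≤ ∑ j, (Sᵀ *ᵥ (S *ᵥ c)) j ^ 2 := by
  set A := ∑ i, (S *ᵥ c) i ^ 2
  have hcs : A ^ 2 ≤ (∑ j, c j ^ 2) * ∑ j, (Sᵀ *ᵥ (S *ᵥ c)) j ^ 2 := by
    simpa only [A, sum_sq_mulVec_eq_sum_mul_transpose_mulVec_mulVec] using
      Finset.sum_mul_sq_le_sq_mul_sq Finset.univ c (Sᵀ *ᵥ (S *ᵥ c))
  set Y := ∑ j, (Sᵀ *ᵥ (S *ᵥ c)) j ^ 2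
  have hA : 0 ≤ A := Finset.sum_nonneg fun i _ => sq_nonneg _
  have hY : 0 ≤ Y := Finset.sum_nonneg fun j _ => sq_nonneg _
  rcases hA.eq_or_lt with hA0 | hApos
  · rw [← hA0, mul_zero]
    exact hY
  · nlinarith [mul_le_mul_of_nonneg_right hc hY]

end Matrix

theorem left_incoherence_le_inv_permeance_general {n r : ℕ}
    (S : Matrix (Fin n) (Fin r) ℝ) (hS : ∀ i j, S i j = 1 ∨ S i j = -1)
    (ν : ℝ) (hν0 : 0 < ν)
    (hν_lb : ∀ u : Fin r → ℝ, (n : ℝ) * ν * (∑ i, u i ^ 2) ≤ ∑ k, (S.mulVec u) k ^ 2)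
    (P : Matrix (Fin n) (Fin n) ℝ) (hPsymm : P.IsSymm) (hPidem : P * P = P)
    (hPrange : ∀ v : Fin n → ℝ, P.mulVec v = v ↔ ∃ c : Fin r → ℝ, S.mulVec c = v) :
    ∀ k : Fin n, (n : ℝ) / r * (∑ i, (P.mulVec (Pi.single k 1)) i ^ 2) ≤ ν⁻¹ := by
  intro k
  obtain ⟨c, hc⟩ := (hPrange (P *ᵥ Pi.single k 1)).1 (by rw [mulVec_mulVec, hPidem])
  have hPS : P * S = S :=
    mul_eq_right_of_forall_mulVec_mulVec_eq fun c => (hPrange _).2 ⟨c, rfl⟩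
  have hrow : Sᵀ *ᵥ (S *ᵥ c) = S k := by
    rw [hc, mulVec_mulVec, ← hPsymm.eq, ← transpose_mul, hPS, mulVec_single_one]
    rfl
  have key := mul_sum_sq_mulVec_le_sum_sq_transpose_mulVec_mulVec S (by positivity) c (hν_lb c)
  rw [hrow, sum_sq_eq_card_of_eq_one_or_eq_neg_one _ (hS k), Fintype.card_fin, hc] at key
  rcases r.eq_zero_or_pos with rfl | hr
  · -- `n / 0 = 0` in `ℝ`
    simpa using hν0.le
  rw [div_mul_eq_mul_div, div_le_iff₀ (by positivity), inv_mul_eq_div, le_div_iff₀ hν0]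
  linarith

/-- A sign matrix `S ∈ {±1}^{n×r}` with permeance
`ν(S) = λ_min(SᵀS)/n > 0` satisfies `μ_(l)(S) ≤ ν(S)⁻¹`, where
`μ_(l)(S) = (n/r) max_k ‖P e_k‖²` and `P` is the orthogonal projector onto
`range S`.  The permeance is encoded variationally: `n ν ≤ ‖S u‖² / ‖u‖²` for
all `u`, with equality attained at some `u ≠ 0`. -/
theorem left_incoherence_le_inv_permeance {n r : ℕ}
    (S : Matrix (Fin n) (Fin r) ℝ) (hS : ∀ i j, S i j = 1 ∨ S i j = -1)
    (ν : ℝ) (hν0 : 0 < ν)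
    (hν_lb : ∀ u : Fin r → ℝ, (n : ℝ) * ν * (∑ i, u i ^ 2) ≤ ∑ k, (S.mulVec u) k ^ 2)
    (hν_att : ∃ u : Fin r → ℝ, u ≠ 0 ∧
      (n : ℝ) * ν * (∑ i, u i ^ 2) = ∑ k, (S.mulVec u) k ^ 2)
    (P : Matrix (Fin n) (Fin n) ℝ) (hPsymm : P.IsSymm) (hPidem : P * P = P)
    (hPrange : ∀ v : Fin n → ℝ, P.mulVec v = v ↔ ∃ c : Fin r → ℝ, S.mulVec c = v) :
    ∀ k : Fin n, (n : ℝ) / r * (∑ i, (P.mulVec (Pi.single k 1)) i ^ 2) ≤ ν⁻¹ :=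
  left_incoherence_le_inv_permeance_general S hS ν hν0 hν_lb P hPsymm hPidem hPrange
end
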